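/- Suppose λ_n is a real sequence with λ_n = n + c + o(1) for a constant c ∈ ℝ, t_n := λ_n π − cπ + δ_n with n·δ_n bounded, and tan(t_n) = A/λ_n + o(1/λ_n) for a constant A. If additionally t_n − nπ → 0, then n·(t_n − nπ) − A → 0, i.e. t_n = nπ + A/n + o(1/n). -/
import Mathlib


open Real Filter Topology Asymptotics

lemma tan_sub_id_littleO : (fun x : ℝ => Real.tan x - x) =o[𝓝 (0:ℝ)] fun x => x := by
  have h : HasDerivAt Real.tan (1 / Real.cos 0 ^ 2) 0 :=
    Real.hasDerivAt_tan (by simp)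
  have h1 : HasDerivAt Real.tan 1 0 := by simpa using h
  have := (hasDerivAt_iff_isLittleO).1 h1
  simpa using this

lemma abs_le_abs_tan {x : ℝ} (h : |x| < π / 2) : |x| ≤ |Real.tan x| := by
  rcases lt_trichotomy x 0 with hx | hx | hx
  · have h1 : 0 < -x := by linarith
    have h2 : -x < π / 2 := by
      have := abs_lt.1 h; linarith [this.1]
    have := Real.lt_tan h1 h2
    rw [Real.tan_neg] at this
    rw [abs_of_neg hx, abs_of_neg (by linarith : Real.tan x < 0)]
    linarith
  · simp [hx]
  · have h2 : x < π / 2 := lt_of_le_of_lt (le_abs_self x) h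
    have := Real.lt_tan hx h2
    rw [abs_of_pos hx, abs_of_pos (by linarith : 0 < Real.tan x)]
    linarith

/-- Eigenvalue asymptotics from the tangent equation: if `λ n = n + c + o(1)`,
`t n = λ n π - c π + δ n` with `n δ n` bounded,
`tan (t n) = A / λ n + o(1/λ n)`, and `t n - n π → 0`, then
`t n = n π + A/n + o(1/n)`, i.e. `n (t n - n π) → A`. -/
theorem stmt_13 (lam t δ : ℕ → ℝ) (c A : ℝ)
    (hlam : Tendsto (fun n : ℕ => lam n - n - c) atTop (𝓝 0))
    (ht : ∀ n, t n = lam n * π - c * π + δ n)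
    (hδ : ∃ M : ℝ, ∀ n : ℕ, |(n : ℝ) * δ n| ≤ M)
    (htan : Tendsto (fun n : ℕ => lam n * (Real.tan (t n) - A / lam n)) atTop (𝓝 0))
    (h0 : Tendsto (fun n : ℕ => t n - n * π) atTop (𝓝 0)) :
    Tendsto (fun n : ℕ => (n : ℝ) * (t n - n * π)) atTop (𝓝 A) := by
  set e : ℕ → ℝ := fun n => t n - n * π with he
  -- lam tends to atTop
  have hlamtop : Tendsto lam atTop atTop := by
    have hn : Tendsto (fun n : ℕ => (n : ℝ) + c) atTop atTop :=
      tendsto_atTop_add_const_right _ c tendsto_natCast_atTop_atTop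
    have := hlam.add_atTop hn
    simpa using this
  have hlam_ne : ∀ᶠ n in atTop, lam n ≠ 0 :=
    (hlamtop.eventually_gt_atTop 0).mono fun n hn => ne_of_gt hn
  -- tan (t n) = tan (e n)
  have htan_eq : ∀ n, Real.tan (t n) = Real.tan (e n) := by
    intro n
    have : t n = e n + n * π := by simp [he]
    rw [this, Real.tan_add_nat_mul_pi]
  -- lam n * tan (e n) → A
  have hA : Tendsto (fun n => lam n * Real.tan (e n)) atTop (𝓝 A) := by
    have h1 : Tendsto (fun n : ℕ => lam n * (Real.tan (t n) - A / lam n) + A)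
        atTop (𝓝 (0 + A)) := htan.add tendsto_const_nhds
    rw [zero_add] at h1
    refine h1.congr' ?_
    filter_upwards [hlam_ne] with n hn
    rw [htan_eq n]
    field_simp
    ring
  -- lam n * e n is bounded
  have hbound : (fun n => lam n * e n) =O[atTop] (fun _ : ℕ => (1:ℝ)) := by
    obtain ⟨C, hC⟩ := (hA.isBigO_one ℝ).bound
    rw [isBigO_iff]
    refine ⟨C, ?_⟩
    filter_upwards [hC, h0.eventually (eventually_abs_sub_lt 0 (by positivity : (0:ℝ) < π/2))]
      with n hCn hen
    rw [sub_zero] at hen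
    have h1 : |e n| ≤ |Real.tan (e n)| := abs_le_abs_tan hen
    have : ‖lam n * e n‖ ≤ ‖lam n * Real.tan (e n)‖ := by
      simp only [norm_mul, Real.norm_eq_abs]
      exact mul_le_mul_of_nonneg_left h1 (abs_nonneg _)
    exact this.trans hCn
  -- lam n * (tan e n - e n) → 0
  have hlittle : (fun n => Real.tan (e n) - e n) =o[atTop] e :=
    tan_sub_id_littleO.comp_tendsto h0
  have hsmall : Tendsto (fun n => lam n * (Real.tan (e n) - e n)) atTop (𝓝 0) := by
    have h2 : (fun n => lam n * (Real.tan (e n) - e n)) =o[atTop] fun n => lam n * e n :=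
      (isBigO_refl lam atTop).mul_isLittleO hlittle
    exact (isLittleO_one_iff ℝ).1 (h2.trans_isBigO hbound)
  -- lam n * e n → A
  have hle : Tendsto (fun n => lam n * e n) atTop (𝓝 A) := by
    have := hA.sub hsmall
    rw [sub_zero] at this
    refine this.congr fun n => by ring
  -- (lam n - n) * e n → 0
  have hc : Tendsto (fun n : ℕ => (lam n - n) * e n) atTop (𝓝 (c * 0)) := by
    have h1 : Tendsto (fun n : ℕ => lam n - n) atTop (𝓝 c) := by
      have := hlam.add (tendsto_const_nhds (x := c))
      rw [zero_add] at this
      exact this.congr fun n => by ring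
    exact h1.mul h0
  rw [mul_zero] at hc
  have := hle.sub hc
  rw [sub_zero] at this
  exact this.congr fun n => by ring
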